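/- arXiv:1710.11314 — 2 statements merged into one kernel-verified Lean document; each statement's English description precedes it below -/
import Mathlib

section
/- Let f = t^a − t^b be a nonzero binomial in I(X*_C) with supp(a) ∩ supp(b) = ∅, such that the degree of f in each variable t_i is strictly less than q−1, and suppose ∅ ≠ supp(a) ⊊ {1,…,k}. Then every nonzero coordinate of a and every nonzero coordinate of b is equal to (q−1)/2. -/
/-!
Evaluating `t^a - t^b` at the point of `X*_C` given by `x = (1, …, 1, g, 1, …, 1)`, with `g` a
generator of `K*` in position `i`, gives `g^(a_i + a_{i-1}) = g^(b_i + b_{i-1})`. Hence the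
differences `s_i = a_i - b_i` satisfy `s_{i+1} = -s_i` in `ℤ/(q-1)`; going once around the odd
cycle gives `s_i = -s_i`, so `q - 1 ∣ 2 a_i` wherever `b_i = 0`. The degree bound `a_i < q - 1`
then forces `a_i = (q - 1)/2`.
-/

open MvPolynomial
open Fin.NatCast

/-- The affine algebraic toric set parameterized by a cycle of length `k`:
`X*_C = {(x₁x₂, x₂x₃, …, x_{k−1}x_k, x_kx₁) : x_j ∈ K*} ⊆ K^k`. -/
def cycleToricSet (K : Type) [Field K] (k : ℕ) : Set (Fin k → K) :=
  {y | ∃ x : Fin k → K, (∀ j, x j ≠ 0) ∧ ∀ j : Fin k, y j = x j * x (finRotate k j)}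

theorem Fintype.prod_mul_apply_perm_pow {ι M : Type*} [Fintype ι] [CommMonoid M]
    (σ : Equiv.Perm ι) (x : ι → M) (c : ι → ℕ) :
    ∏ j, (x j * x (σ j)) ^ c j = ∏ j, x j ^ (c j + c (σ.symm j)) := by
  simp only [mul_pow, Finset.prod_mul_distrib, pow_add]
  congr 1
  rw [← Equiv.prod_comp σ fun j ↦ x j ^ c (σ.symm j)]
  simp

theorem Fintype.prod_mulSingle_pow {ι M : Type*} [Fintype ι] [DecidableEq ι] [CommMonoid M]
    (i : ι) (g : M) (e : ι → ℕ) : ∏ j, Pi.mulSingle i g j ^ e j = g ^ e i := by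
  rw [Finset.prod_eq_single i (fun j _ hj ↦ by simp [hj]) (by simp)]
  simp

theorem MvPolynomial.eval_mul_apply_perm_monomial {ι R : Type*} [Fintype ι] [CommSemiring R]
    (σ : Equiv.Perm ι) (x : ι → R) (c : ι →₀ ℕ) :
    eval (fun j ↦ x j * x (σ j)) (monomial c 1) = ∏ j, x j ^ (c j + c (σ.symm j)) := by
  rw [eval_monomial, one_mul, Finsupp.prod_fintype _ _ fun j ↦ pow_zero _,
    Fintype.prod_mul_apply_perm_pow]

theorem MvPolynomial.left_mem_support_monomial_sub_monomial {σ R : Type*} [CommRing R]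
    [Nontrivial R] {a b : σ →₀ ℕ} (hab : a ≠ b) :
    a ∈ (monomial a (1 : R) - monomial b 1).support := by
  classical
  rw [mem_support_iff, coeff_sub, coeff_monomial, coeff_monomial, if_pos rfl, if_neg hab.symm]
  simp

theorem finRotate_succ_pow_apply (n m : ℕ) (j : Fin (n + 1)) :
    (finRotate (n + 1) ^ m) j = j + (m : Fin (n + 1)) := by
  induction m with
  | zero => simp
  | succ m ih => rw [pow_succ', Equiv.Perm.mul_apply, ih, finRotate_apply, Nat.cast_succ, add_assoc]

theorem finRotate_pow_self (n : ℕ) : finRotate n ^ n = 1 := by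
  cases n with
  | zero => exact Subsingleton.elim _ _
  | succ n => ext1 j; rw [finRotate_succ_pow_apply, Fin.natCast_self, add_zero]; rfl

theorem Equiv.Perm.two_nsmul_eq_zero_of_apply_eq_neg {ι G : Type*} [AddCommGroup G]
    {σ : Equiv.Perm ι} {n : ℕ} (hσ : σ ^ n = 1) (hn : Odd n) {S : ι → G}
    (hS : ∀ j, S (σ j) = -S j) (j : ι) : 2 • S j = 0 := by
  have hpow : ∀ m : ℕ, S ((σ ^ m) j) = (-1 : ℤ) ^ m • S j := by
    intro m
    induction m with
    | zero => simp
    | succ m ih =>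
      rw [pow_succ', Equiv.Perm.mul_apply, hS, ih, pow_succ, mul_comm, mul_zsmul, neg_one_zsmul]
  have h := hpow n
  rw [hσ, Equiv.Perm.one_apply, hn.neg_one_pow, neg_one_zsmul, eq_neg_iff_add_eq_zero] at h
  rwa [two_nsmul]

theorem Nat.eq_div_two_of_two_nsmul_natCast_eq_zero {m c : ℕ} (hc : c ≠ 0) (hcm : c < m)
    (h : 2 • (c : ZMod m) = 0) : c = m / 2 := by
  obtain ⟨d, hd⟩ : m ∣ 2 * c := by
    rw [← ZMod.natCast_eq_zero_iff]
    simpa using h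
  have : d < 2 := by nlinarith
  interval_cases d <;> omega

section CycleToricSet

variable {K : Type} [Field K] [Fintype K] {k : ℕ} {a b : Fin k →₀ ℕ}

theorem modEq_of_binomial_mem_vanishingIdeal_cycleToricSet
    (h : monomial a (1 : K) - monomial b 1 ∈ vanishingIdeal K (cycleToricSet K k)) (i : Fin k) :
    a i + a ((finRotate k).symm i) ≡ b i + b ((finRotate k).symm i) [MOD Fintype.card K - 1] := by
  classical
  obtain ⟨g, hg⟩ := IsCyclic.exists_generator (α := Kˣ)
  have hord : orderOf g = Fintype.card K - 1 := by
    rw [orderOf_eq_card_of_forall_mem_zpowers hg, Nat.card_units, Nat.card_eq_fintype_card]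
  set x : Fin k → K := Pi.mulSingle i (g : K)
  have hx : (fun j ↦ x j * x (finRotate k j)) ∈ cycleToricSet K k :=
    ⟨x, fun j ↦ by by_cases hj : j = i <;> simp [x, hj], fun _ ↦ rfl⟩
  have heval : eval (fun j ↦ x j * x (finRotate k j)) (monomial a 1 - monomial b 1) = 0 :=
    mem_vanishingIdeal_iff.mp h _ hx
  rw [map_sub, sub_eq_zero, eval_mul_apply_perm_monomial, eval_mul_apply_perm_monomial,
    Fintype.prod_mulSingle_pow, Fintype.prod_mulSingle_pow] at heval
  rw [← hord, ← pow_eq_pow_iff_modEq]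
  exact Units.ext (by simpa using heval)

theorem two_nsmul_sub_eq_zero_of_binomial_mem_vanishingIdeal_cycleToricSet (hk : Odd k)
    (h : monomial a (1 : K) - monomial b 1 ∈ vanishingIdeal K (cycleToricSet K k)) (j : Fin k) :
    2 • ((a j : ZMod (Fintype.card K - 1)) - b j) = 0 := by
  refine Equiv.Perm.two_nsmul_eq_zero_of_apply_eq_neg (finRotate_pow_self k) hk
    (S := fun j ↦ (a j : ZMod (Fintype.card K - 1)) - b j) (fun j ↦ ?_) j
  have hj := (ZMod.natCast_eq_natCast_iff _ _ _).mpr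
    (modEq_of_binomial_mem_vanishingIdeal_cycleToricSet h (finRotate k j))
  rw [Equiv.symm_apply_apply] at hj
  push_cast at hj
  linear_combination hj

theorem eq_div_two_of_binomial_mem_vanishingIdeal_cycleToricSet (hk : Odd k)
    (h : monomial a (1 : K) - monomial b 1 ∈ vanishingIdeal K (cycleToricSet K k))
    (hdeg : ∀ i, degreeOf i (monomial a (1 : K) - monomial b 1) < Fintype.card K - 1)
    {i : Fin k} (hai : a i ≠ 0) (hbi : b i = 0) : a i = (Fintype.card K - 1) / 2 := by
  have hab : a ≠ b := fun hab ↦ hai (hab ▸ hbi)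
  refine Nat.eq_div_two_of_two_nsmul_natCast_eq_zero hai
    ((monomial_le_degreeOf i (left_mem_support_monomial_sub_monomial hab)).trans_lt (hdeg i)) ?_
  simpa [hbi] using two_nsmul_sub_eq_zero_of_binomial_mem_vanishingIdeal_cycleToricSet hk h i

end CycleToricSet

theorem coords_eq_half_general (q k γ : ℕ) (hk : k = 2 * γ + 1)
    (K : Type) [Field K] [Fintype K] (hq : Fintype.card K = q)
    (a b : Fin k →₀ ℕ) (hdisj : Disjoint a.support b.support)
    (f : MvPolynomial (Fin k) K)
    (hf : f = (monomial a (1 : K)) - monomial b 1)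
    (hmem : f ∈ MvPolynomial.vanishingIdeal K (cycleToricSet K k))
    (hdeg : ∀ i : Fin k, MvPolynomial.degreeOf i f < q - 1) :
    (∀ i ∈ a.support, a i = (q - 1) / 2) ∧ (∀ i ∈ b.support, b i = (q - 1) / 2) := by
  subst hf hq
  have hodd : Odd k := ⟨γ, hk⟩
  have hmem' : monomial b (1 : K) - monomial a 1 ∈ vanishingIdeal K (cycleToricSet K k) := by
    rwa [← neg_sub, Ideal.neg_mem_iff]
  have hdeg' : ∀ i, degreeOf i (monomial b (1 : K) - monomial a 1) < Fintype.card K - 1 := by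
    simpa only [← neg_sub (monomial a _), degreeOf_neg] using hdeg
  refine ⟨fun i hi ↦ ?_, fun i hi ↦ ?_⟩
  · exact eq_div_two_of_binomial_mem_vanishingIdeal_cycleToricSet hodd hmem hdeg
      (Finsupp.mem_support_iff.mp hi)
      (Finsupp.notMem_support_iff.mp (Finset.disjoint_left.mp hdisj hi))
  · exact eq_div_two_of_binomial_mem_vanishingIdeal_cycleToricSet hodd hmem' hdeg'
      (Finsupp.mem_support_iff.mp hi)
      (Finsupp.notMem_support_iff.mp (Finset.disjoint_right.mp hdisj hi))

/-- Let `f = t^a − t^b` be a nonzero binomial in `I(X*_C)` with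
`supp(a) ∩ supp(b) = ∅` whose degree in each variable is strictly less than `q−1`,
and suppose `∅ ≠ supp(a) ⊊ {1,…,k}`. Then every nonzero coordinate of `a` and
every nonzero coordinate of `b` equals `(q−1)/2`. -/
theorem coords_eq_half (q k γ : ℕ) (hγ : 1 ≤ γ) (hk : k = 2 * γ + 1)
    (K : Type) [Field K] [Fintype K] (hq : Fintype.card K = q) (hq2 : 2 ∣ q - 1)
    (a b : Fin k →₀ ℕ) (hdisj : Disjoint a.support b.support)
    (f : MvPolynomial (Fin k) K)
    (hf : f = (monomial a (1 : K)) - monomial b 1)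
    (hf0 : f ≠ 0)
    (hmem : f ∈ MvPolynomial.vanishingIdeal K (cycleToricSet K k))
    (hdeg : ∀ i : Fin k, MvPolynomial.degreeOf i f < q - 1)
    (hane : a.support.Nonempty)
    (haproper : a.support ⊂ Finset.univ) :
    (∀ i ∈ a.support, a i = (q - 1) / 2) ∧ (∀ i ∈ b.support, b i = (q - 1) / 2) :=
  coords_eq_half_general q k γ hk K hq a b hdisj f hf hmem hdeg
end

section
/- The set G = {t_i^{q−1}−1 : 1 ≤ i ≤ km} ∪ (A_1 ∪ ⋯ ∪ A_m) is a Gröbner basis of I(X*_𝒢) with respect to the graded lexicographic monomial order; that is, G ⊆ I(X*_𝒢) and for every nonzero f ∈ I(X*_𝒢) the leading monomial of f with respect to the graded lexicographic order is divisible by the leading monomial of some element of G. -/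
/-!
The binomials vanish on `X*` because on an odd cycle the product of the two monomials of a
binomial is a square, so by Euler's criterion their `(q−1)/2`-th powers agree.

Conversely, let `μ` be the leading monomial of `0 ≠ f ∈ I(X*)` and suppose no `t_j^{q−1}`
and no product of `γ + 1` powers `t_w^{(q−1)/2}` of one cycle divides it. The points of `X*`
are the images of the torus `(K*)^{km}` under `x ↦ (x_p x_{p+1})_p`, on which monomials become
characters, so by Dedekind's independence of characters some other monomial `ν` of `f` gives
the same character as `μ`. On a cycle this says `μ_p + μ_{p+1} ≡ ν_p + ν_{p+1} (mod q−1)`,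
and as the cycle is odd, `μ − ν` is constant along it and congruent to `0` or `(q−1)/2`.
Because `μ` is reduced, in the first case `μ ≤ ν` on the cycle, and in the second the cycle
has more small than large exponents of `μ`, so its degree in `ν` is strictly larger. Hence
`deg ν > deg μ`, contradicting the choice of `μ`.
-/

open MvPolynomial

/-- The affine algebraic toric set parameterized by the disjoint union of `m` cycles of
length `k`. -/
def cyclesToricSet (K : Type) [Field K] (k m : ℕ) : Set (Fin m × Fin k → K) :=
  {y | ∃ x : Fin m × Fin k → K, (∀ p, x p ≠ 0) ∧
    ∀ p : Fin m × Fin k, y p = x p * x (p.1, finRotate k p.2)}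

/-- The set `A_i` of binomials attached to the `i`-th cycle. -/
def cycleBinomials (K : Type) [Field K] (q k m γ : ℕ) (i : Fin m) :
    Set (MvPolynomial (Fin m × Fin k) K) :=
  {f | ∃ s : Finset (Fin k), s.card = γ ∧
    f = (∏ α ∈ s, X ((i, α) : Fin m × Fin k) ^ ((q - 1) / 2)) -
        ∏ w ∈ sᶜ, X ((i, w) : Fin m × Fin k) ^ ((q - 1) / 2)}

/-- The natural linear ordering of the variables `t_{(i−1)k+j}`, identifying the pair `(i, j)`
with the number `i·k + j`. -/
def varLT {m k : ℕ} (p p' : Fin m × Fin k) : Prop :=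
  (p.1 : ℕ) * k + (p.2 : ℕ) < (p'.1 : ℕ) * k + (p'.2 : ℕ)

/-- The graded lexicographic order on monomials (exponent vectors): first compare total
degrees, then compare lexicographically with respect to the variable ordering. -/
def grlexLT {m k : ℕ} (μ ν : Fin m × Fin k →₀ ℕ) : Prop :=
  (μ.sum fun _ e => e) < (ν.sum fun _ e => e) ∨
    ((μ.sum fun _ e => e) = (ν.sum fun _ e => e) ∧
      Finsupp.Lex varLT (· < ·) μ ν)

/-- `μ` is the leading monomial of `f` with respect to the graded lexicographic order:
`μ` occurs in `f` and is grlex-larger than every other monomial of `f`. -/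
def IsLeadingMonomial {K : Type} [Field K] {m k : ℕ}
    (f : MvPolynomial (Fin m × Fin k) K) (μ : Fin m × Fin k →₀ ℕ) : Prop :=
  μ ∈ f.support ∧ ∀ ν ∈ f.support, ν ≠ μ → grlexLT ν μ

open Finset

variable {K : Type} [Field K] {m k : ℕ}

theorem eq_zero_and_add_self_eq_zero_of_add_one_eq_neg {A : Type*} [AddCommGroup A] {γ : ℕ}
    {D : Fin (2 * γ + 1) → A} (hD : ∀ a, D (a + 1) = -D a) :
    (∀ a, D a = D 0) ∧ D 0 + D 0 = 0 := by
  have halt (a : Fin (2 * γ + 1)) : D a = (-1 : ℤ) ^ (a : ℕ) • D 0 := by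
    induction a using Fin.induction with
    | zero => simp
    | succ a ih =>
      rw [← Fin.coeSucc_eq_succ, hD, ih, Fin.coeSucc_eq_succ, Fin.val_succ, Fin.val_castSucc,
        pow_succ, mul_neg_one, neg_zsmul]
  have hneg : D 0 = -D 0 := by
    simpa [halt (Fin.last _), (even_two_mul γ).neg_one_pow] using hD (Fin.last _)
  refine ⟨fun a => ?_, eq_neg_iff_add_eq_zero.mp hneg⟩
  rcases neg_one_pow_eq_or ℤ (a : ℕ) with h | h <;> simp [halt a, h, ← hneg]

theorem ZMod.eq_zero_or_eq_of_add_self_eq_zero {h : ℕ} (hh : 0 < h) {x : ZMod (2 * h)}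
    (hx : x + x = 0) : x = 0 ∨ x = h := by
  have : NeZero (2 * h) := ⟨by omega⟩
  rw [← ZMod.natCast_zmod_val x] at hx ⊢
  rw [← Nat.cast_add, ZMod.natCast_eq_zero_iff] at hx
  obtain ⟨t, ht⟩ := hx
  have hlt := x.val_lt
  obtain rfl | rfl : t = 0 ∨ t = 1 := by
    rcases t with _ | _ | t
    · simp
    · simp
    · nlinarith
  · left; simp [show x.val = 0 by omega]
  · right; rw [show x.val = h by omega]

theorem Nat.le_of_natCast_eq_natCast {n u v : ℕ} (h : (u : ZMod n) = v) (hu : u < n) :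
    u ≤ v := by
  rw [ZMod.natCast_eq_natCast_iff'] at h
  calc u = u % n := (Nat.mod_eq_of_lt hu).symm
    _ = v % n := h
    _ ≤ v := Nat.mod_le _ _

theorem sum_lt_sum_of_add_le_of_le_add {α : Type*} [Fintype α] {u v : α → ℕ} {h : ℕ}
    (hh : 0 < h) (hlow : ∀ a, u a < h → u a + h ≤ v a) (hhigh : ∀ a, u a ≤ v a + h)
    (hcard : #{a | h ≤ u a} < #{a | u a < h}) : ∑ a, u a < ∑ a, v a := by
  classical
  set L : Finset α := {a | u a < h}
  have hLc : Lᶜ = ({a | h ≤ u a} : Finset α) := by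
    ext a
    simp [L]
  have hsumL : ∑ a ∈ L, u a + #L * h ≤ ∑ a ∈ L, v a := by
    rw [← smul_eq_mul, ← sum_const, ← sum_add_distrib]
    exact sum_le_sum fun a ha => hlow a (mem_filter.mp ha).2
  have hsumLc : ∑ a ∈ Lᶜ, u a ≤ ∑ a ∈ Lᶜ, v a + #Lᶜ * h := by
    rw [← smul_eq_mul, ← sum_const, ← sum_add_distrib]
    exact sum_le_sum fun a _ => hhigh a
  have hcardLc : #Lᶜ * h + h ≤ #L * h := by
    rw [← Nat.succ_mul]
    exact Nat.mul_le_mul_right h (hLc ▸ hcard)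
  rw [← sum_add_sum_compl L u, ← sum_add_sum_compl L v]
  omega

theorem le_or_sum_lt_of_adjacent_sum_modEq {γ h : ℕ} (hh : 0 < h)
    {u v : Fin (2 * γ + 1) → ℕ} (hu : ∀ a, u a < 2 * h) (hcard : #{a | h ≤ u a} ≤ γ)
    (hrel : ∀ a, u a + u (a + 1) ≡ v a + v (a + 1) [MOD 2 * h]) :
    (∀ a, u a ≤ v a) ∨ ∑ a, u a < ∑ a, v a := by
  set D : Fin (2 * γ + 1) → ZMod (2 * h) := fun a => u a - v a
  have hD (a : Fin (2 * γ + 1)) : D (a + 1) = -D a := by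
    have := (ZMod.natCast_eq_natCast_iff _ _ _).mpr (hrel a)
    push_cast at this
    linear_combination this
  obtain ⟨hconst, hD0⟩ := eq_zero_and_add_self_eq_zero_of_add_one_eq_neg hD
  rcases ZMod.eq_zero_or_eq_of_add_self_eq_zero hh hD0 with h0 | h0
  · refine Or.inl fun a => Nat.le_of_natCast_eq_natCast ?_ (hu a)
    exact sub_eq_zero.mp ((hconst a).trans h0)
  · have hshift (a : Fin (2 * γ + 1)) : (u a : ZMod (2 * h)) = v a + h :=
      sub_eq_iff_eq_add'.mp ((hconst a).trans h0)
    have hhalf : (h + h : ZMod (2 * h)) = 0 := by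
      rw [← two_mul]; exact_mod_cast ZMod.natCast_self (2 * h)
    refine Or.inr (sum_lt_sum_of_add_le_of_le_add hh
      (fun a ha => Nat.le_of_natCast_eq_natCast (n := 2 * h) ?_ (by omega))
      (fun a => Nat.le_of_natCast_eq_natCast ?_ (hu a)) ?_)
    · push_cast
      rw [hshift, add_assoc, hhalf, add_zero]
    · push_cast
      exact hshift a
    · have := card_filter_add_card_filter_not (s := univ) fun a => h ≤ u a
      simp only [card_univ, Fintype.card_fin, not_le] at this
      omega

theorem Finsupp.degree_lt_of_forall_le_or_sum_lt {ι κ : Type*} [Fintype ι] [Fintype κ]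
    {μ ν : ι × κ →₀ ℕ} (hne : μ ≠ ν)
    (h : ∀ i, (∀ a, μ (i, a) ≤ ν (i, a)) ∨ ∑ a, μ (i, a) < ∑ a, ν (i, a)) :
    μ.degree < ν.degree := by
  rw [Finsupp.degree_eq_sum, Finsupp.degree_eq_sum]
  by_cases hlt : ∃ i, ∑ a, μ (i, a) < ∑ a, ν (i, a)
  · obtain ⟨i, hi⟩ := hlt
    have hle (i : ι) : ∑ a, μ (i, a) ≤ ∑ a, ν (i, a) :=
      (h i).elim (fun h => Finset.sum_le_sum fun a _ => h a) le_of_lt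
    rw [Fintype.sum_prod_type, Fintype.sum_prod_type]
    exact Finset.sum_lt_sum (fun i _ => hle i) ⟨i, mem_univ _, hi⟩
  · push Not at hlt
    have hμν (j : ι × κ) : μ j ≤ ν j := (h j.1).resolve_right (hlt j.1).not_gt j.2
    obtain ⟨j, hj⟩ : ∃ j, μ j ≠ ν j := by
      by_contra! heq
      exact hne (Finsupp.ext heq)
    exact Finset.sum_lt_sum (fun j _ => hμν j) ⟨j, mem_univ _, (hμν j).lt_of_ne hj⟩

/-- Dedekind's independence of characters, for a family that need not be injective. -/
theorem exists_ne_eq_of_sum_smul_eq_zero {G ι : Type*} [Monoid G] {s : Finset ι}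
    {c : ι → K} {χ : ι → G →* K} (h : ∑ j ∈ s, c j • ⇑(χ j) = 0) {i : ι} (hi : i ∈ s)
    (hc : c i ≠ 0) :
    ∃ j ∈ s, j ≠ i ∧ χ j = χ i := by
  classical
  by_contra! hχ
  set l : (G →* K) →₀ K := ∑ j ∈ s, Finsupp.single (χ j) (c j)
  have hl : Finsupp.linearCombination K (fun f : G →* K => (f : G → K)) l = 0 := by
    simpa [l, map_sum] using h
  have hli := DFunLike.congr_fun
    (linearIndependent_iff.mp (linearIndependent_monoidHom G K) l hl) (χ i)
  rw [Finsupp.finsetSum_apply, Finset.sum_eq_single i] at hli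
  · simp [hc] at hli
  · intro j hj hji
    simp [hχ j hj hji]
  · exact absurd hi

theorem exists_ne_mem_support_of_eval_eq_zero {σ G : Type*} [Monoid G] (φ : G →* σ → Kˣ)
    {f : MvPolynomial σ K} (hf : ∀ g, eval (fun j => (φ g j : K)) f = 0) {μ : σ →₀ ℕ}
    (hμ : μ ∈ f.support) :
    ∃ ν ∈ f.support, ν ≠ μ ∧ ∀ g, eval (fun j => (φ g j : K)) (monomial ν 1) =
      eval (fun j => (φ g j : K)) (monomial μ 1) := by
  let χ : (σ →₀ ℕ) → G →* K := fun a =>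
    { toFun := fun g => eval (fun j => (φ g j : K)) (monomial a 1)
      map_one' := by simp [eval_monomial]
      map_mul' := fun g g' => by simp [eval_monomial, mul_pow, Finsupp.prod_mul] }
  have hsum : ∑ a ∈ f.support, coeff a f • ⇑(χ a) = 0 := by
    funext g
    rw [Pi.zero_apply, ← hf g, eval_eq]
    simp [χ, eval_monomial, Finsupp.prod]
  obtain ⟨ν, hν, hne, heq⟩ :=
    exists_ne_eq_of_sum_smul_eq_zero hsum hμ (mem_support_iff.mp hμ)
  exact ⟨ν, hν, hne, DFunLike.congr_fun heq⟩

theorem modEq_of_forall_prod_pow_eq [Fintype K] {ι : Type*} [Fintype ι] {e e' : ι → ℕ}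
    (h : ∀ x : ι → Kˣ, ∏ j, x j ^ e j = ∏ j, x j ^ e' j) (j : ι) :
    e j ≡ e' j [MOD Fintype.card K - 1] := by
  classical
  obtain ⟨g, hg⟩ := IsCyclic.exists_generator (α := Kˣ)
  have horder : orderOf g = Fintype.card K - 1 := by
    rw [orderOf_eq_card_of_forall_mem_zpowers hg, Nat.card_eq_fintype_card, Fintype.card_units]
  have hsingle (n : ι → ℕ) : ∏ i, Pi.mulSingle j g i ^ n i = g ^ n j := by
    rw [Fintype.prod_eq_single j fun i hi => by rw [Pi.mulSingle_eq_of_ne hi, one_pow],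
      Pi.mulSingle_eq_same]
  have hj := h (Pi.mulSingle j g)
  rw [hsingle, hsingle] at hj
  rw [← horder]
  exact pow_eq_pow_iff_modEq.mp hj

/-- Euler's criterion: `P` and `Q` have the same quadratic character. -/
theorem pow_half_eq_of_mul_eq_sq [Fintype K] {h : ℕ} (hK : Fintype.card K - 1 = 2 * h)
    {P Q c : K} (hP : P ≠ 0) (hc : c ≠ 0) (hPQ : P * Q = c ^ 2) : P ^ h = Q ^ h := by
  have hPP : P ^ h * P ^ h = 1 := by
    rw [← pow_add, ← two_mul, ← hK, FiniteField.pow_card_sub_one_eq_one _ hP]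
  have hPQ' : P ^ h * Q ^ h = 1 := by
    rw [← mul_pow, hPQ, ← pow_mul, ← hK, FiniteField.pow_card_sub_one_eq_one _ hc]
  exact mul_left_cancel₀ (pow_ne_zero _ hP) (hPP.trans hPQ'.symm)

/-- The toric set of the graph with edges `{p, σ p}` is the image of the torus under this map. -/
def edgeParam {ι M : Type*} [CommMonoid M] (σ : Equiv.Perm ι) : (ι → M) →* (ι → M) where
  toFun x p := x p * x (σ p)
  map_one' := by funext; simp
  map_mul' x y := by funext p; simp [mul_mul_mul_comm]

theorem prod_edgeParam_pow {ι M : Type*} [Fintype ι] [CommMonoid M] (σ : Equiv.Perm ι)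
    (x : ι → M) (a : ι → ℕ) :
    ∏ j, edgeParam σ x j ^ a j = ∏ j, x j ^ (a j + a (σ.symm j)) := by
  simp only [edgeParam, MonoidHom.coe_mk, OneHom.coe_mk, mul_pow, prod_mul_distrib, pow_add]
  congr 1
  simpa using Equiv.prod_comp σ fun j => x j ^ a (σ.symm j)

theorem modEq_of_eval_edgeParam_eq [Fintype K] {ι : Type*} [Fintype ι] (σ : Equiv.Perm ι)
    {μ ν : ι →₀ ℕ}
    (h : ∀ x : ι → Kˣ, eval (fun p => ((edgeParam σ x p : Kˣ) : K)) (monomial μ 1) =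
      eval (fun p => ((edgeParam σ x p : Kˣ) : K)) (monomial ν 1)) (p : ι) :
    μ p + μ (σ p) ≡ ν p + ν (σ p) [MOD Fintype.card K - 1] := by
  have key (x : ι → Kˣ) :
      ∏ j, x j ^ (μ j + μ (σ.symm j)) = ∏ j, x j ^ (ν j + ν (σ.symm j)) := by
    rw [← prod_edgeParam_pow, ← prod_edgeParam_pow]
    ext
    simpa [eval_monomial, Finsupp.prod_pow] using h x
  simpa [add_comm] using modEq_of_forall_prod_pow_eq key (σ p)

theorem IsLeadingMonomial.degree_le {f : MvPolynomial (Fin m × Fin k) K}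
    {μ ν : Fin m × Fin k →₀ ℕ} (hμ : IsLeadingMonomial f μ) (hν : ν ∈ f.support) :
    ν.degree ≤ μ.degree := by
  rcases eq_or_ne ν μ with rfl | hne
  · exact le_rfl
  rcases hμ.2 ν hν hne with h | ⟨h, -⟩
  · exact h.le
  · exact h.le

theorem isLeadingMonomial_neg_iff {f : MvPolynomial (Fin m × Fin k) K}
    {μ : Fin m × Fin k →₀ ℕ} :
    IsLeadingMonomial (-f) μ ↔ IsLeadingMonomial f μ := by
  simp only [IsLeadingMonomial, support_neg]

theorem isLeadingMonomial_monomial_sub_monomial {A B : Fin m × Fin k →₀ ℕ}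
    (h : A.degree < B.degree) :
    IsLeadingMonomial (monomial B 1 - monomial A 1 : MvPolynomial (Fin m × Fin k) K) B := by
  have hAB : A ≠ B := by rintro rfl; exact lt_irrefl _ h
  refine ⟨by simp [coeff_monomial, hAB], fun ν hν hνB => Or.inl ?_⟩
  obtain rfl : ν = A := by
    by_contra hνA
    simp [coeff_monomial, Ne.symm hνA, Ne.symm hνB] at hν
  exact h

theorem isLeadingMonomial_X_pow_sub_one (j : Fin m × Fin k) {n : ℕ} (hn : 0 < n) :
    IsLeadingMonomial (X j ^ n - 1 : MvPolynomial (Fin m × Fin k) K) (Finsupp.single j n) := by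
  rw [X_pow_eq_monomial, ← C_1, ← monomial_zero']
  exact isLeadingMonomial_monomial_sub_monomial (by simpa using hn)

theorem prod_X_pow_eq_monomial_sum_single {R σ ι : Type*} [CommSemiring R] (s : Finset ι)
    (g : ι → σ) (h : ℕ) :
    ∏ w ∈ s, (X (g w) : MvPolynomial σ R) ^ h =
      monomial (∑ w ∈ s, Finsupp.single (g w) h) 1 := by
  simp [monomial_sum_one, X_pow_eq_monomial]

theorem sum_single_le_of_forall_le {ι κ : Type*} {i : ι} {s : Finset κ} {h : ℕ}
    {μ : ι × κ →₀ ℕ} (hμ : ∀ w ∈ s, h ≤ μ (i, w)) :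
    ∑ w ∈ s, Finsupp.single (i, w) h ≤ μ := by
  classical
  intro ⟨i', a⟩
  simp only [Finsupp.coe_finsetSum, Finset.sum_apply, Finsupp.single_apply, Prod.mk.injEq]
  rcases eq_or_ne i i' with rfl | hi
  · simp only [true_and, Finset.sum_ite_eq']
    split_ifs with ha
    exacts [hμ a ha, Nat.zero_le _]
  · simp [hi]

theorem isLeadingMonomial_cycleBinomial {i : Fin m} {s : Finset (Fin k)} {h : ℕ} (hh : 0 < h)
    (hs : #s < #sᶜ) :
    IsLeadingMonomial ((∏ α ∈ s, X ((i, α) : Fin m × Fin k) ^ h) -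
        ∏ w ∈ sᶜ, X ((i, w) : Fin m × Fin k) ^ h : MvPolynomial (Fin m × Fin k) K)
      (∑ w ∈ sᶜ, Finsupp.single ((i, w) : Fin m × Fin k) h) := by
  rw [prod_X_pow_eq_monomial_sum_single, prod_X_pow_eq_monomial_sum_single, ← neg_sub,
    isLeadingMonomial_neg_iff]
  refine isLeadingMonomial_monomial_sub_monomial ?_
  simpa [map_sum, Finsupp.degree_single] using Nat.mul_lt_mul_of_pos_right hs hh

theorem ne_zero_of_mem_cyclesToricSet {y : Fin m × Fin k → K} (hy : y ∈ cyclesToricSet K k m)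
    (p : Fin m × Fin k) : y p ≠ 0 := by
  obtain ⟨x, hx, hxy⟩ := hy
  obtain rfl : y = _ := funext hxy
  exact mul_ne_zero (hx _) (hx _)

theorem X_pow_card_sub_one_sub_one_mem_vanishingIdeal [Fintype K] (j : Fin m × Fin k) :
    X j ^ (Fintype.card K - 1) - 1 ∈ vanishingIdeal K (cyclesToricSet K k m) := by
  rw [mem_vanishingIdeal_iff]
  intro y hy
  simp [FiniteField.pow_card_sub_one_eq_one _ (ne_zero_of_mem_cyclesToricSet hy j)]

theorem exists_prod_cycle_eq_sq {y : Fin m × Fin k → K} (hy : y ∈ cyclesToricSet K k m)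
    (i : Fin m) : ∃ c ≠ 0, ∏ a, y (i, a) = c ^ 2 := by
  obtain ⟨x, hx, hxy⟩ := hy
  obtain rfl : y = _ := funext hxy
  refine ⟨∏ a, x (i, a), prod_ne_zero_iff.mpr fun a _ => hx _, ?_⟩
  rw [prod_mul_distrib, Equiv.prod_comp (finRotate k) fun a => x (i, a), sq]

theorem cycleBinomials_subset_vanishingIdeal [Fintype K] {γ : ℕ}
    (hK : 2 ∣ Fintype.card K - 1) (i : Fin m) :
    cycleBinomials K (Fintype.card K) k m γ i ⊆ vanishingIdeal K (cyclesToricSet K k m) := by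
  rintro _ ⟨s, -, rfl⟩
  rw [SetLike.mem_coe, mem_vanishingIdeal_iff]
  intro y hy
  obtain ⟨c, hc, hsq⟩ := exists_prod_cycle_eq_sq hy i
  have hy0 := ne_zero_of_mem_cyclesToricSet hy
  simp only [map_sub, map_prod, map_pow, aeval_X, Finset.prod_pow, sub_eq_zero]
  refine pow_half_eq_of_mul_eq_sq (Nat.two_mul_div_two_of_even (even_iff_two_dvd.mpr hK)).symm
    (prod_ne_zero_iff.mpr fun a _ => hy0 _) hc ?_
  rw [prod_mul_prod_compl, hsq]

def cycleRotation (k m : ℕ) : Equiv.Perm (Fin m × Fin k) :=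
  Equiv.prodCongr (Equiv.refl _) (finRotate k)

theorem edgeParam_mem_cyclesToricSet (x : Fin m × Fin k → Kˣ) :
    (fun p => ((edgeParam (cycleRotation k m) x p : Kˣ) : K)) ∈ cyclesToricSet K k m :=
  ⟨fun p => x p, fun p => (x p).ne_zero, fun _ => Units.val_mul _ _⟩

theorem exists_lt_card_of_isLeadingMonomial [Fintype K] {γ : ℕ}
    {f : MvPolynomial (Fin m × Fin (2 * γ + 1)) K}
    (hf : f ∈ vanishingIdeal K (cyclesToricSet K (2 * γ + 1) m))
    {μ : Fin m × Fin (2 * γ + 1) →₀ ℕ} (hμ : IsLeadingMonomial f μ)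
    (hK : 2 ∣ Fintype.card K - 1) (hsmall : ∀ j, μ j < Fintype.card K - 1) :
    ∃ i, γ < #{a | (Fintype.card K - 1) / 2 ≤ μ (i, a)} := by
  obtain ⟨h, hh⟩ := hK
  have hpos : 0 < h := by have := Fintype.one_lt_card (α := K); omega
  rw [hh, Nat.mul_div_cancel_left _ two_pos]
  rw [hh] at hsmall
  by_contra! hcard
  have hvan (x : Fin m × Fin (2 * γ + 1) → Kˣ) :
      eval (fun p => ((edgeParam (cycleRotation (2 * γ + 1) m) x p : Kˣ) : K)) f = 0 :=
    (mem_vanishingIdeal_iff.mp hf) _ (edgeParam_mem_cyclesToricSet x)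
  obtain ⟨ν, hν, hνμ, heq⟩ := exists_ne_mem_support_of_eval_eq_zero _ hvan hμ.1
  have hrel := modEq_of_eval_edgeParam_eq _ fun x => (heq x).symm
  rw [hh] at hrel
  refine (hμ.degree_le hν).not_gt
    (Finsupp.degree_lt_of_forall_le_or_sum_lt hνμ.symm fun i => ?_)
  refine le_or_sum_lt_of_adjacent_sum_modEq hpos (fun a => hsmall _) (hcard i) fun a => ?_
  simpa [cycleRotation, finRotate_apply] using hrel (i, a)

theorem groebner_basis_cycles_general (q k m γ : ℕ) (hk : k = 2 * γ + 1)
    (K : Type) [Field K] [Fintype K] (hq : Fintype.card K = q) (hq2 : 2 ∣ q - 1) :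
    ({p : MvPolynomial (Fin m × Fin k) K | ∃ j : Fin m × Fin k, p = X j ^ (q - 1) - 1} ∪
        ⋃ i : Fin m, cycleBinomials K q k m γ i) ⊆
      (MvPolynomial.vanishingIdeal K (cyclesToricSet K k m) :
        Set (MvPolynomial (Fin m × Fin k) K)) ∧
    ∀ f ∈ MvPolynomial.vanishingIdeal K (cyclesToricSet K k m), f ≠ 0 →
      ∀ μ : Fin m × Fin k →₀ ℕ, IsLeadingMonomial f μ →
        ∃ g ∈ ({p : MvPolynomial (Fin m × Fin k) K |
                  ∃ j : Fin m × Fin k, p = X j ^ (q - 1) - 1} ∪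
                ⋃ i : Fin m, cycleBinomials K q k m γ i),
          ∃ ν : Fin m × Fin k →₀ ℕ, IsLeadingMonomial g ν ∧ ν ≤ μ := by
  subst hk hq
  have hhalf : 0 < (Fintype.card K - 1) / 2 := by
    have := Fintype.one_lt_card (α := K); omega
  refine ⟨Set.union_subset ?_ <| Set.iUnion_subset <| cycleBinomials_subset_vanishingIdeal hq2, ?_⟩
  · rintro _ ⟨j, rfl⟩
    exact X_pow_card_sub_one_sub_one_mem_vanishingIdeal j
  intro f hf _ μ hμ
  by_cases hbig : ∃ j, Fintype.card K - 1 ≤ μ j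
  · obtain ⟨j, hj⟩ := hbig
    exact ⟨_, Or.inl ⟨j, rfl⟩, _, isLeadingMonomial_X_pow_sub_one j (by omega),
      Finsupp.single_le_iff.mpr hj⟩
  push Not at hbig
  obtain ⟨i, hi⟩ := exists_lt_card_of_isLeadingMonomial hf hμ hq2 hbig
  obtain ⟨c, hc, hcard⟩ := exists_subset_card_eq hi
  have hcardc : #cᶜ = γ := by rw [card_compl, hcard, Fintype.card_fin]; omega
  refine ⟨_, Or.inr (Set.mem_iUnion.mpr ⟨i, cᶜ, hcardc, rfl⟩), _,
    isLeadingMonomial_cycleBinomial hhalf (by rw [compl_compl]; omega), ?_⟩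
  rw [compl_compl]
  exact sum_single_le_of_forall_le fun w hw => (mem_filter.mp (hc hw)).2

/-- The set `G = {t_i^{q−1}−1 : 1 ≤ i ≤ km} ∪ (A₁ ∪ ⋯ ∪ A_m)` is a
Gröbner basis of `I(X*_𝒢)` with respect to the graded lexicographic monomial order: `G` is
contained in `I(X*_𝒢)` and the leading monomial of every nonzero `f ∈ I(X*_𝒢)` is divisible
by the leading monomial of some element of `G`. -/
theorem groebner_basis_cycles (q k m γ : ℕ) (hγ : 1 ≤ γ) (hk : k = 2 * γ + 1) (hm : 1 ≤ m)
    (K : Type) [Field K] [Fintype K] (hq : Fintype.card K = q) (hq2 : 2 ∣ q - 1) :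
    ({p : MvPolynomial (Fin m × Fin k) K | ∃ j : Fin m × Fin k, p = X j ^ (q - 1) - 1} ∪
        ⋃ i : Fin m, cycleBinomials K q k m γ i) ⊆
      (MvPolynomial.vanishingIdeal K (cyclesToricSet K k m) :
        Set (MvPolynomial (Fin m × Fin k) K)) ∧
    ∀ f ∈ MvPolynomial.vanishingIdeal K (cyclesToricSet K k m), f ≠ 0 →
      ∀ μ : Fin m × Fin k →₀ ℕ, IsLeadingMonomial f μ →
        ∃ g ∈ ({p : MvPolynomial (Fin m × Fin k) K |
                  ∃ j : Fin m × Fin k, p = X j ^ (q - 1) - 1} ∪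
                ⋃ i : Fin m, cycleBinomials K q k m γ i),
          ∃ ν : Fin m × Fin k →₀ ℕ, IsLeadingMonomial g ν ∧ ν ≤ μ :=
  groebner_basis_cycles_general q k m γ hk K hq hq2
end
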